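/- Let L be a commutative unital quantale, let X, Y, Z be interpolative generalized L-closure spaces, let Θ : X×Y → L be an approximable L-relation from X to Y, and let Υ : Y×Z → L be an approximable L-relation from Y to Z. Then the composition Υ∘Θ : X×Z → L, defined by (Υ∘Θ)(x,z) = ⋁_{y∈Y} Θ(x,y) ⊗ Υ(y,z), is an approximable L-relation from X to Z. -/
import Mathlib


universe u

/-- A commutative unital quantale structure on a complete lattice `L`. -/
structure CommQuantale (L : Type u) [CompleteLattice L] : Type u where
  mul : L → L → L
  mul_comm : ∀ a b, mul a b = mul b a
  mul_assoc : ∀ a b c, mul (mul a b) c = mul a (mul b c)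
  unit : L
  mul_unit : ∀ a, mul a unit = a
  mul_sSup : ∀ (a : L) (S : Set L), mul a (sSup S) = ⨆ s ∈ S, mul a s

namespace CommQuantale

variable {L : Type u} [CompleteLattice L]

/-- The residuation `b → c`, the right adjoint of `⊗`. -/
def res (Q : CommQuantale L) (b c : L) : L := sSup {a | Q.mul a b ≤ c}

/-- `sub(A,B) = ⋀ₓ (A x → B x)` for `L`-subsets. -/
def subL (Q : CommQuantale L) {X : Type u} (A B : X → L) : L :=
  ⨅ x, Q.res (A x) (B x)

open Classical in
/-- The characteristic function `u_x`. -/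
noncomputable def ux (Q : CommQuantale L) {X : Type u} (x : X) : X → L :=
  fun y => if y = x then Q.unit else ⊥

/-- `e` is an `L`-order on `P`. -/
def IsLOrder (Q : CommQuantale L) {P : Type u} (e : P → P → L) : Prop :=
  (∀ x, Q.unit ≤ e x x) ∧
  (∀ x y z, Q.mul (e x y) (e y z) ≤ e x z) ∧
  (∀ x y, Q.unit ≤ e x y → Q.unit ≤ e y x → x = y)

/-- `D` is a directed `L`-subset of `(P, e)`. -/
def IsDirectedL (Q : CommQuantale L) {P : Type u} (e : P → P → L) (D : P → L) : Prop :=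
  (Q.unit ≤ ⨆ x, D x) ∧
  (∀ x y, Q.mul (D x) (D y) ≤ ⨆ z, Q.mul (Q.mul (D z) (e x z)) (e y z))

/-- `x₀` is the supremum `⊔A` of the `L`-subset `A`. -/
def IsSupL (Q : CommQuantale L) {P : Type u} (e : P → P → L) (A : P → L) (x₀ : P) : Prop :=
  ∀ y, e x₀ y = Q.subL A (fun x => e x y)

/-- `(P, e)` is an `L`-dcpo: every directed `L`-subset has a supremum. -/
def IsDcpoL (Q : CommQuantale L) {P : Type u} (e : P → P → L) : Prop :=
  ∀ D : P → L, Q.IsDirectedL e D → ∃ s, Q.IsSupL e D s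

/-- `⇓x : P → L`, i.e. `⇓x(y) = ⋀_{D directed} (e(x, ⊔D) → ⋁_d D(d) ⊗ e(y,d))`. -/
def wayBelow (Q : CommQuantale L) {P : Type u} (e : P → P → L) (x : P) : P → L := fun y =>
  ⨅ (D : P → L) (_ : Q.IsDirectedL e D) (s : P) (_ : Q.IsSupL e D s),
    Q.res (e x s) (⨆ d, Q.mul (D d) (e y d))

/-- `(P, e)` is a continuous `L`-dcpo. -/
def IsContinuousLDcpo (Q : CommQuantale L) {P : Type u} (e : P → P → L) : Prop :=
  Q.IsLOrder e ∧ Q.IsDcpoL e ∧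
  ∀ x, Q.IsDirectedL e (Q.wayBelow e x) ∧ Q.IsSupL e (Q.wayBelow e x) x

open Classical in
/-- `k(x)(y) = e(y,x)` if `y` is compact (i.e. `u ≤ ⇓y(y)`), else `0`. -/
noncomputable def kfun (Q : CommQuantale L) {P : Type u} (e : P → P → L) (x : P) : P → L :=
  fun y => if Q.unit ≤ Q.wayBelow e y y then e y x else ⊥

/-- `(P, e)` is an algebraic `L`-dcpo. -/
noncomputable def IsAlgebraicLDcpo (Q : CommQuantale L) {P : Type u} (e : P → P → L) : Prop :=
  Q.IsLOrder e ∧ Q.IsDcpoL e ∧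
  ∀ x, Q.IsDirectedL e (Q.kfun e x) ∧ Q.IsSupL e (Q.kfun e x) x

/-- `cl` is a generalized `L`-closure operator: (GC1) and (GC2). -/
def IsGenClosure (Q : CommQuantale L) {X : Type u} (cl : (X → L) → (X → L)) : Prop :=
  (∀ A B, Q.subL A B ≤ Q.subL (cl A) (cl B)) ∧
  (∀ A, cl (cl A) ≤ cl A)

/-- Interpolation conditions (IT1)-(IT3). -/
noncomputable def IsInterpolative (Q : CommQuantale L) {X : Type u}
    (cl : (X → L) → (X → L)) : Prop :=
  (∀ x, Q.unit ≤ ⨆ t, cl (Q.ux x) t) ∧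
  (∀ x y, cl (Q.ux x) y ≤ ⨆ t, Q.mul (cl (Q.ux x) t) (cl (Q.ux t) y)) ∧
  (∀ x a b, Q.mul (cl (Q.ux x) a) (cl (Q.ux x) b) ≤
    ⨆ t, Q.mul (Q.mul (cl (Q.ux x) t) (cl (Q.ux t) a)) (cl (Q.ux t) b))

/-- `U` is a directed closed set: (DC1)-(DC4). -/
noncomputable def IsDirClosed (Q : CommQuantale L) {X : Type u}
    (cl : (X → L) → (X → L)) (U : X → L) : Prop :=
  (Q.unit ≤ ⨆ x, U x) ∧
  (∀ x, U x ≤ Q.subL (cl (Q.ux x)) U) ∧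
  (∀ x, U x ≤ ⨆ y, Q.mul (U y) (cl (Q.ux y) x)) ∧
  (∀ x y, Q.mul (U x) (U y) ≤
    ⨆ z, Q.mul (Q.mul (U z) (cl (Q.ux z) x)) (cl (Q.ux z) y))

end CommQuantale
open CommQuantale in
/-- An approximable L-relation Θ between interpolative generalized L-closure spaces,
conditions (AP1)-(AP5). -/
noncomputable def IsApproxRel {L X Y : Type u} [CompleteLattice L] (Q : CommQuantale L)
    (clX : (X → L) → (X → L)) (clY : (Y → L) → (Y → L)) (Θ : X → Y → L) : Prop :=
  (∀ x, Q.unit ≤ ⨆ y, Θ x y) ∧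
  (∀ x x' y, Q.mul (clX (Q.ux x') x) (Θ x y) ≤ Θ x' y) ∧
  (∀ x y y', Q.mul (Θ x y) (clY (Q.ux y) y') ≤ Θ x y') ∧
  (∀ x y, Θ x y ≤
    ⨆ x', ⨆ y', Q.mul (Q.mul (clX (Q.ux x) x') (Θ x' y')) (clY (Q.ux y') y)) ∧
  (∀ x y₁ y₂, Q.mul (Θ x y₁) (Θ x y₂) ≤
    ⨆ y₃, Q.mul (Q.mul (Θ x y₃) (clY (Q.ux y₃) y₁)) (clY (Q.ux y₃) y₂))

namespace CommQuantale

variable {L : Type u} [CompleteLattice L]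

theorem mul_iSup (Q : CommQuantale L) {ι : Sort*} (a : L) (f : ι → L) :
    Q.mul a (⨆ i, f i) = ⨆ i, Q.mul a (f i) := by
  rw [iSup, Q.mul_sSup, iSup_range]

theorem iSup_mul (Q : CommQuantale L) {ι : Sort*} (a : L) (f : ι → L) :
    Q.mul (⨆ i, f i) a = ⨆ i, Q.mul (f i) a := by
  rw [Q.mul_comm, Q.mul_iSup]; exact iSup_congr fun i => Q.mul_comm a (f i)

theorem mul_mono_right (Q : CommQuantale L) {c d : L} (a : L) (h : c ≤ d) :
    Q.mul a c ≤ Q.mul a d := by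
  have : d = ⨆ b : ({c, d} : Set L), (b : L) := by
    rw [iSup_subtype]
    apply le_antisymm
    · exact le_iSup₂_of_le d (by simp) le_rfl
    · exact iSup₂_le fun b hb => by rcases hb with rfl | rfl; exact h; exact le_rfl
  rw [this, Q.mul_iSup]
  exact le_iSup_of_le ⟨c, by simp⟩ le_rfl

theorem mul_mono (Q : CommQuantale L) {a b c d : L} (h₁ : a ≤ b) (h₂ : c ≤ d) :
    Q.mul a c ≤ Q.mul b d := by
  calc Q.mul a c ≤ Q.mul a d := Q.mul_mono_right a h₂
    _ = Q.mul d a := Q.mul_comm a d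
    _ ≤ Q.mul d b := Q.mul_mono_right d h₁
    _ = Q.mul b d := Q.mul_comm d b

theorem unit_mul (Q : CommQuantale L) (a : L) : Q.mul Q.unit a = a := by
  rw [Q.mul_comm, Q.mul_unit]

end CommQuantale

open CommQuantale in
/-- The composition (Υ∘Θ)(x,z) = ⋁_y Θ(x,y) ⊗ Υ(y,z) of approximable
L-relations between interpolative generalized L-closure spaces is an approximable
L-relation. -/
theorem stmt19 {L X Y Z : Type u} [CompleteLattice L] (Q : CommQuantale L)
    (clX : (X → L) → (X → L)) (clY : (Y → L) → (Y → L)) (clZ : (Z → L) → (Z → L))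
    (hgcX : Q.IsGenClosure clX) (hintX : Q.IsInterpolative clX)
    (hgcY : Q.IsGenClosure clY) (hintY : Q.IsInterpolative clY)
    (hgcZ : Q.IsGenClosure clZ) (hintZ : Q.IsInterpolative clZ)
    (Θ : X → Y → L) (hΘ : IsApproxRel Q clX clY Θ)
    (Υ : Y → Z → L) (hΥ : IsApproxRel Q clY clZ Υ) :
    IsApproxRel Q clX clZ (fun x z => ⨆ y, Q.mul (Θ x y) (Υ y z)) := by
  obtain ⟨hΘ1, hΘ2, hΘ3, hΘ4, hΘ5⟩ := hΘ
  obtain ⟨hΥ1, hΥ2, hΥ3, hΥ4, hΥ5⟩ := hΥ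
  refine ⟨?_, ?_, ?_, ?_, ?_⟩
  · -- AP1
    intro x
    refine (hΘ1 x).trans (iSup_le fun y => ?_)
    calc Θ x y = Q.mul (Θ x y) Q.unit := (Q.mul_unit _).symm
      _ ≤ Q.mul (Θ x y) (⨆ z, Υ y z) := Q.mul_mono_right _ (hΥ1 y)
      _ = ⨆ z, Q.mul (Θ x y) (Υ y z) := Q.mul_iSup _ _
      _ ≤ ⨆ z, ⨆ y', Q.mul (Θ x y') (Υ y' z) :=
          iSup_mono fun z => le_iSup (fun y' => Q.mul (Θ x y') (Υ y' z)) y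
  · -- AP2
    intro x x' z
    rw [Q.mul_iSup]
    refine iSup_le fun y => ?_
    rw [← Q.mul_assoc]
    exact le_iSup_of_le y (Q.mul_mono (hΘ2 x x' y) le_rfl)
  · -- AP3
    intro x z z'
    rw [Q.iSup_mul]
    refine iSup_le fun y => ?_
    rw [Q.mul_assoc]
    exact le_iSup_of_le y (Q.mul_mono_right _ (hΥ3 y z z'))
  · -- AP4
    intro x z
    refine iSup_le fun y => ?_
    have step1 : Q.mul (Θ x y) (Υ y z) ≤
        ⨆ x', ⨆ y₀, Q.mul (Q.mul (clX (Q.ux x) x') (Θ x' y₀)) (Υ y₀ z) := by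
      calc Q.mul (Θ x y) (Υ y z)
          ≤ Q.mul (⨆ x', ⨆ y₀, Q.mul (Q.mul (clX (Q.ux x) x') (Θ x' y₀)) (clY (Q.ux y₀) y))
            (Υ y z) := Q.mul_mono (hΘ4 x y) le_rfl
        _ = ⨆ x', ⨆ y₀, Q.mul (Q.mul (Q.mul (clX (Q.ux x) x') (Θ x' y₀)) (clY (Q.ux y₀) y))
            (Υ y z) := by
            rw [Q.iSup_mul]; exact iSup_congr fun x' => Q.iSup_mul _ _
        _ ≤ ⨆ x', ⨆ y₀, Q.mul (Q.mul (clX (Q.ux x) x') (Θ x' y₀)) (Υ y₀ z) := by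
            refine iSup_mono fun x' => iSup_mono fun y₀ => ?_
            rw [Q.mul_assoc]
            exact Q.mul_mono_right _ (hΥ2 y y₀ z)
    refine step1.trans (iSup_le fun x' => iSup_le fun y₀ => ?_)
    have step2 : Q.mul (Q.mul (clX (Q.ux x) x') (Θ x' y₀)) (Υ y₀ z) ≤
        ⨆ y₁, ⨆ z', Q.mul (Q.mul (clX (Q.ux x) x')
          (Q.mul (Θ x' y₁) (Υ y₁ z'))) (clZ (Q.ux z') z) := by
      calc Q.mul (Q.mul (clX (Q.ux x) x') (Θ x' y₀)) (Υ y₀ z)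
          ≤ Q.mul (Q.mul (clX (Q.ux x) x') (Θ x' y₀))
            (⨆ y₁, ⨆ z', Q.mul (Q.mul (clY (Q.ux y₀) y₁) (Υ y₁ z')) (clZ (Q.ux z') z)) :=
            Q.mul_mono_right _ (hΥ4 y₀ z)
        _ = ⨆ y₁, ⨆ z', Q.mul (Q.mul (clX (Q.ux x) x') (Θ x' y₀))
            (Q.mul (Q.mul (clY (Q.ux y₀) y₁) (Υ y₁ z')) (clZ (Q.ux z') z)) := by
            rw [Q.mul_iSup]; exact iSup_congr fun y₁ => Q.mul_iSup _ _
        _ ≤ ⨆ y₁, ⨆ z', Q.mul (Q.mul (clX (Q.ux x) x')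
            (Q.mul (Θ x' y₁) (Υ y₁ z'))) (clZ (Q.ux z') z) := by
            refine iSup_mono fun y₁ => iSup_mono fun z' => ?_
            have h3 : Q.mul (Θ x' y₀) (clY (Q.ux y₀) y₁) ≤ Θ x' y₁ := hΘ3 x' y₀ y₁
            calc Q.mul (Q.mul (clX (Q.ux x) x') (Θ x' y₀))
                  (Q.mul (Q.mul (clY (Q.ux y₀) y₁) (Υ y₁ z')) (clZ (Q.ux z') z))
                = Q.mul (Q.mul (clX (Q.ux x) x')
                    (Q.mul (Q.mul (Θ x' y₀) (clY (Q.ux y₀) y₁)) (Υ y₁ z')))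
                    (clZ (Q.ux z') z) := by
                  simp only [Q.mul_assoc]
              _ ≤ _ := Q.mul_mono (Q.mul_mono_right _ (Q.mul_mono h3 le_rfl)) le_rfl
    refine step2.trans (iSup_le fun y₁ => iSup_le fun z' => ?_)
    exact le_iSup_of_le x' (le_iSup_of_le z'
      (Q.mul_mono (Q.mul_mono_right _
        (le_iSup (fun y => Q.mul (Θ x' y) (Υ y z')) y₁)) le_rfl))
  · -- AP5
    intro x z₁ z₂
    rw [Q.iSup_mul]
    refine iSup_le fun y₁ => ?_
    rw [Q.mul_iSup]
    refine iSup_le fun y₂ => ?_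
    have step1 : Q.mul (Q.mul (Θ x y₁) (Υ y₁ z₁)) (Q.mul (Θ x y₂) (Υ y₂ z₂)) ≤
        ⨆ y₃, Q.mul (Q.mul (Θ x y₃) (Υ y₃ z₁)) (Υ y₃ z₂) := by
      have e1 : Q.mul (Q.mul (Θ x y₁) (Υ y₁ z₁)) (Q.mul (Θ x y₂) (Υ y₂ z₂)) =
          Q.mul (Q.mul (Q.mul (Θ x y₁) (Θ x y₂)) (Υ y₁ z₁)) (Υ y₂ z₂) := by
        simp only [Q.mul_assoc]
        congr 1
        rw [← Q.mul_assoc, Q.mul_comm (Υ y₁ z₁) (Θ x y₂), Q.mul_assoc]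
      rw [e1]
      calc Q.mul (Q.mul (Q.mul (Θ x y₁) (Θ x y₂)) (Υ y₁ z₁)) (Υ y₂ z₂)
          ≤ Q.mul (Q.mul (⨆ y₃, Q.mul (Q.mul (Θ x y₃) (clY (Q.ux y₃) y₁)) (clY (Q.ux y₃) y₂))
              (Υ y₁ z₁)) (Υ y₂ z₂) :=
            Q.mul_mono (Q.mul_mono (hΘ5 x y₁ y₂) le_rfl) le_rfl
        _ = ⨆ y₃, Q.mul (Q.mul (Q.mul (Q.mul (Θ x y₃) (clY (Q.ux y₃) y₁)) (clY (Q.ux y₃) y₂))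
              (Υ y₁ z₁)) (Υ y₂ z₂) := by
            rw [Q.iSup_mul, Q.iSup_mul]
        _ ≤ ⨆ y₃, Q.mul (Q.mul (Θ x y₃) (Υ y₃ z₁)) (Υ y₃ z₂) := by
            refine iSup_mono fun y₃ => ?_
            have h1 : Q.mul (clY (Q.ux y₃) y₁) (Υ y₁ z₁) ≤ Υ y₃ z₁ := hΥ2 y₁ y₃ z₁
            have h2 : Q.mul (clY (Q.ux y₃) y₂) (Υ y₂ z₂) ≤ Υ y₃ z₂ := hΥ2 y₂ y₃ z₂
            calc Q.mul (Q.mul (Q.mul (Q.mul (Θ x y₃) (clY (Q.ux y₃) y₁)) (clY (Q.ux y₃) y₂))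
                  (Υ y₁ z₁)) (Υ y₂ z₂)
                = Q.mul (Q.mul (Θ x y₃) (Q.mul (clY (Q.ux y₃) y₁) (Υ y₁ z₁)))
                    (Q.mul (clY (Q.ux y₃) y₂) (Υ y₂ z₂)) := by
                  simp only [Q.mul_assoc]
                  congr 1; congr 1
                  rw [← Q.mul_assoc, Q.mul_comm (clY (Q.ux y₃) y₂) (Υ y₁ z₁), Q.mul_assoc]
              _ ≤ _ := Q.mul_mono (Q.mul_mono_right _ h1) h2
    refine step1.trans (iSup_le fun y₃ => ?_)
    calc Q.mul (Q.mul (Θ x y₃) (Υ y₃ z₁)) (Υ y₃ z₂)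
        = Q.mul (Θ x y₃) (Q.mul (Υ y₃ z₁) (Υ y₃ z₂)) := Q.mul_assoc _ _ _
      _ ≤ Q.mul (Θ x y₃)
            (⨆ z₃, Q.mul (Q.mul (Υ y₃ z₃) (clZ (Q.ux z₃) z₁)) (clZ (Q.ux z₃) z₂)) :=
          Q.mul_mono_right _ (hΥ5 y₃ z₁ z₂)
      _ = ⨆ z₃, Q.mul (Q.mul (Q.mul (Θ x y₃) (Υ y₃ z₃)) (clZ (Q.ux z₃) z₁))
            (clZ (Q.ux z₃) z₂) := by
          rw [Q.mul_iSup]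
          exact iSup_congr fun z₃ => by simp only [Q.mul_assoc]
      _ ≤ _ := by
          refine iSup_mono fun z₃ => ?_
          exact Q.mul_mono (Q.mul_mono
            (le_iSup (fun y => Q.mul (Θ x y) (Υ y z₃)) y₃) le_rfl) le_rfl
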